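/- arXiv:2410.06701 — 2 statements merged into one kernel-verified Lean document; each statement's English description precedes it below -/
import Mathlib

section
/- Let H ∈ C¹([0,∞)) be nonnegative with H(η) = 0 for η large, and define φ(ξ) = 4π∫₀^∞ √(ξ²+u²) H(u²) u² du and ψ(ξ) = (4π/3)∫₀^∞ (u²/√(ξ²+u²)) H(u²) u² du. Let σ be a solution on an interval [0,T) of σ' = 4π(ρ+p), where γ(t) := exp(−∫₀^t σ(τ) dτ), ρ(t) := γ(t)^{−4} φ(γ(t)), p(t) := γ(t)^{−4} ψ(γ(t)), with initial condition σ(0) = √((8π/3) ρ(0)). Then σ(t)² = (8π/3) ρ(t) for all t ∈ [0,T). -/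
noncomputable section

open Real MeasureTheory Set Filter

/-- Physical space / momentum space ℝ³. -/
abbrev E3 := EuclideanSpace ℝ (Fin 3)

namespace EV

/-- ⟨v⟩ = √(1+|v|²). -/
def vb (v : E3) : ℝ := Real.sqrt (1 + ‖v‖ ^ 2)

/-- A fixed unit vector in ℝ³. -/
def e1 : E3 := EuclideanSpace.single (0 : Fin 3) (1 : ℝ)

/-- Spherical symmetry of a phase-space density: invariance under SO(3). -/
def SphSymm (g : E3 → E3 → ℝ) : Prop :=
  ∀ R : E3 ≃ₗᵢ[ℝ] E3, LinearEquiv.det R.toLinearEquiv = 1 →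
    ∀ x v : E3, g (R x) (R v) = g x v

/-- Mass-energy density ρ(t,r) = ∫ ⟨v⟩ f(t,x,v) dv, |x| = r. -/
def rho (f : ℝ → E3 → E3 → ℝ) (t r : ℝ) : ℝ :=
  ∫ v : E3, vb v * f t (r • e1) v

/-- Mass-current j(t,r) = ∫ (x·v/r) f(t,x,v) dv, |x| = r. -/
def jmom (f : ℝ → E3 → E3 → ℝ) (t r : ℝ) : ℝ :=
  ∫ v : E3, ((inner ℝ (r • e1) v : ℝ) / r) * f t (r • e1) v

/-- Radial pressure p(t,r) = ∫ (x·v/r)² f(t,x,v) dv/⟨v⟩, |x| = r. -/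
def prad (f : ℝ → E3 → E3 → ℝ) (t r : ℝ) : ℝ :=
  ∫ v : E3, ((inner ℝ (r • e1) v : ℝ) / r) ^ 2 / vb v * f t (r • e1) v

/-- Tangential pressure p_T(t,r) = (1/2)∫ |x×v/r|² f(t,x,v) dv/⟨v⟩, |x| = r,
using |x×v|² = |x|²|v|² - (x·v)². -/
def pT (f : ℝ → E3 → E3 → ℝ) (t r : ℝ) : ℝ :=
  (1 / 2) * ∫ v : E3,
    ((r ^ 2 * ‖v‖ ^ 2 - (inner ℝ (r • e1) v : ℝ) ^ 2) / r ^ 2) / vb v * f t (r • e1) v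

/-- A(t,r) = 1 - (8π/r)∫₀^r (ρ - aβj)(t,s) s² ds. -/
def Afield (f : ℝ → E3 → E3 → ℝ) (a β : ℝ → ℝ → ℝ) (t r : ℝ) : ℝ :=
  1 - (8 * π / r) * ∫ s in (0:ℝ)..r, (rho f t s - a t s * β t s * jmom f t s) * s ^ 2

/-- Radial derivative (one-sided at r = 0). -/
def dr (g : ℝ → ℝ → ℝ) (t r : ℝ) : ℝ := derivWithin (g t) (Ici 0) r

/-- Second radial derivative. -/
def dr2 (g : ℝ → ℝ → ℝ) (t r : ℝ) : ℝ := derivWithin (fun s => dr g t s) (Ici 0) r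

/-- Time derivative within the time interval I. -/
def dt (I : Set ℝ) (g : ℝ → ℝ → ℝ) (t r : ℝ) : ℝ := derivWithin (fun τ => g τ r) I t

/-- Spatial part of the Vlasov characteristic field:
v/(a⟨v⟩) − β x/r. -/
def F1 (a β : ℝ → ℝ → ℝ) (t : ℝ) (x v : E3) : E3 :=
  (1 / (a t ‖x‖ * vb v)) • v - (β t ‖x‖ / ‖x‖) • x

/-- Momentum part of the Vlasov characteristic field:
4πr a j (x·v/r)(x/r) + (∂_rβ − β/r)(x·v/r)(x/r) + (β/r)v. -/
def F2 (a β jf : ℝ → ℝ → ℝ) (t : ℝ) (x v : E3) : E3 :=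
  (((4 * π * ‖x‖ * a t ‖x‖ * jf t ‖x‖ + dr β t ‖x‖ - β t ‖x‖ / ‖x‖) *
      ((inner ℝ x v : ℝ) / ‖x‖)) / ‖x‖) • x
  + (β t ‖x‖ / ‖x‖) • v

/-- The Vlasov equation with fields a, β and current jf, on the time interval I. -/
def VlasovOn (I : Set ℝ) (a β jf : ℝ → ℝ → ℝ) (f : ℝ → E3 → E3 → ℝ) : Prop :=
  ∀ t ∈ I, ∀ x v : E3, x ≠ 0 →
    derivWithin (fun τ => f τ x v) I t
      + fderiv ℝ (fun y => f t y v) x (F1 a β t x v)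
      + fderiv ℝ (fun w => f t x w) v (F2 a β jf t x v) = 0

/-- Regularity of the metric coefficient a. -/
structure RegA (I : Set ℝ) (a : ℝ → ℝ → ℝ) : Prop where
  c1 : ContDiffOn ℝ 1 (fun p : ℝ × ℝ => a p.1 p.2) (I ×ˢ Ici 0)
  pos : ∀ t ∈ I, ∀ r : ℝ, 0 ≤ r → 0 < a t r
  bc0 : ∀ t ∈ I, a t 0 = 1
  bc1 : ∀ t ∈ I, dr a t 0 = 0

/-- Regularity of the metric coefficient β. -/
structure RegBeta (I : Set ℝ) (β : ℝ → ℝ → ℝ) : Prop where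
  c1 : ContDiffOn ℝ 1 (fun p : ℝ × ℝ => β p.1 p.2) (I ×ˢ Ici 0)
  c1' : ContDiffOn ℝ 1 (fun p : ℝ × ℝ => dr β p.1 p.2) (I ×ˢ Ici 0)
  bc0 : ∀ t ∈ I, β t 0 = 0
  bc2 : ∀ t ∈ I, dr2 β t 0 = 0

/-- Regularity of a prescribed radial current. -/
structure RegJ (I : Set ℝ) (jf : ℝ → ℝ → ℝ) : Prop where
  c1 : ContDiffOn ℝ 1 (fun p : ℝ × ℝ => jf p.1 p.2) (I ×ˢ Ici 0)
  bc0 : ∀ t ∈ I, jf t 0 = 0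
  supp : ∀ J ⊆ I, IsCompact J → ∃ R : ℝ, ∀ t ∈ J, ∀ r : ℝ, R ≤ r → jf t r = 0

/-- Regularity of the particle density f. -/
structure RegF (I : Set ℝ) (f : ℝ → E3 → E3 → ℝ) : Prop where
  c1 : ContDiffOn ℝ 1 (fun p : ℝ × E3 × E3 => f p.1 p.2.1 p.2.2) (I ×ˢ univ)
  symm : ∀ t ∈ I, SphSymm (f t)
  supp : ∀ J ⊆ I, IsCompact J → ∃ R : ℝ, ∀ t ∈ J, ∀ x v : E3,
    R ≤ ‖x‖ ∨ R ≤ ‖v‖ → f t x v = 0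

/-- Local boundedness of the fields: a⁻¹, raj, β, ∂_rβ bounded on J×[0,∞) for compact J ⊆ I. -/
def LocBounded (I : Set ℝ) (a β jf : ℝ → ℝ → ℝ) : Prop :=
  ∀ J ⊆ I, IsCompact J → ∃ C : ℝ, ∀ t ∈ J, ∀ r : ℝ, 0 ≤ r →
    1 / a t r ≤ C ∧ |r * a t r * jf t r| ≤ C ∧ |β t r| ≤ C ∧ |dr β t r| ≤ C

/-- Regular solution of the reduced spherically symmetric Einstein–Vlasov system in
Painlevé–Gullstrand coordinates on the time interval I. -/
structure IsRegSol (I : Set ℝ) (f : ℝ → E3 → E3 → ℝ) (a β : ℝ → ℝ → ℝ) : Prop where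
  f_nonneg : ∀ t ∈ I, ∀ x v : E3, 0 ≤ f t x v
  f_reg : RegF I f
  a_reg : RegA I a
  β_reg : RegBeta I β
  loc_bdd : LocBounded I a β (jmom f)
  vlasov : VlasovOn I a β (jmom f) f
  feq_β : ∀ t ∈ I, ∀ r : ℝ, 0 < r →
    dt I β t r - β t r * dr β t r
      = (1 - Afield f a β t r) / (2 * r) + 4 * π * r * prad f t r
  feq_a : ∀ t ∈ I, ∀ r : ℝ, 0 < r →
    dt I a t r - β t r * dr a t r = -(4 * π * r * (a t r) ^ 2 * jmom f t r)

/-- Admissible initial data for the reduced system. -/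
structure AdmData (f0 : E3 → E3 → ℝ) (a0 β0 : ℝ → ℝ) : Prop where
  f0_c1 : ContDiff ℝ 1 (fun p : E3 × E3 => f0 p.1 p.2)
  f0_cpt : HasCompactSupport (fun p : E3 × E3 => f0 p.1 p.2)
  f0_symm : SphSymm f0
  f0_nonneg : ∀ x v : E3, 0 ≤ f0 x v
  a0_c1 : ContDiffOn ℝ 1 a0 (Ici 0)
  a0_pos : ∀ r : ℝ, 0 ≤ r → 0 < a0 r
  a0_zero : a0 0 = 1
  a0_der : derivWithin a0 (Ici 0) 0 = 0
  a0_inf : Tendsto a0 atTop (nhds 1)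
  β0_c2 : ContDiffOn ℝ 2 β0 (Ici 0)
  β0_zero : β0 0 = 0
  β0_der2 : derivWithin (fun r => derivWithin β0 (Ici 0) r) (Ici 0) 0 = 0
  β0_inf : Tendsto β0 atTop (nhds 0)
  constraint : ∀ r : ℝ, 0 ≤ r →
    1 / (a0 r) ^ 2 - (β0 r) ^ 2
      = 1 - (8 * π / r) * ∫ s in (0:ℝ)..r,
          (rho (fun _ => f0) 0 s - a0 s * β0 s * jmom (fun _ => f0) 0 s) * s ^ 2

/-- The solution (f,a,β) is launched by the data (f0,a0,β0). -/
def Launches (f : ℝ → E3 → E3 → ℝ) (a β : ℝ → ℝ → ℝ)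
    (f0 : E3 → E3 → ℝ) (a0 β0 : ℝ → ℝ) : Prop :=
  (∀ x v : E3, f 0 x v = f0 x v) ∧ ∀ r : ℝ, 0 ≤ r → a 0 r = a0 r ∧ β 0 r = β0 r

/-- A characteristic curve of the Vlasov equation on the time interval I. -/
def IsChar (I : Set ℝ) (a β jf : ℝ → ℝ → ℝ) (x v : ℝ → E3) : Prop :=
  ∀ t ∈ I, HasDerivWithinAt x (F1 a β t (x t) (v t)) I t ∧
    HasDerivWithinAt v (F2 a β jf t (x t) (v t)) I t

/-- α_ε = (1 − ε^{1/5})/(6π). -/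
def alphaEps (ε : ℝ) : ℝ := (1 - ε ^ ((1:ℝ)/5)) / (6 * π)

/-- The dust quantity σ_D(t) = (2/3)/(1−t) = ∂_rβ_D(t). -/
def sigmaD (t : ℝ) : ℝ := (2/3) / (1 - t)

/-- The dust scale function γ_D(t) = (1−t)^{2/3}. -/
def gammaD (t : ℝ) : ℝ := (1 - t) ^ ((2:ℝ)/3)

/-- Hypotheses on the momentum profile H. -/
structure HProps (H : ℝ → ℝ) : Prop where
  c1 : ContDiffOn ℝ 1 H (Ici 0)
  nonneg : ∀ η : ℝ, 0 ≤ η → 0 ≤ H η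
  anti : AntitoneOn H (Ici 0)
  normalized : (∫ v : E3, H (‖v‖ ^ 2)) = 1
  vanish : ∀ η : ℝ, 1 ≤ η → H η = 0

/-- Hypotheses on the macroscopic profile ρ₀ of the Oppenheimer–Snyder-approximating data. -/
structure Rho0Props (ε : ℝ) (ρ₀ : ℝ → ℝ) : Prop where
  c1 : ContDiffOn ℝ 1 ρ₀ (Ici 0)
  nonneg : ∀ r : ℝ, 0 ≤ r → 0 ≤ ρ₀ r
  anti : AntitoneOn ρ₀ (Ici 0)
  core : ∀ r ∈ Icc (0:ℝ) 1, ρ₀ r = alphaEps ε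
  vanish : ∀ r : ℝ, 1 + ε ≤ r → ρ₀ r = 0

/-- The Oppenheimer–Snyder-approximating initial particle density
f̊(x,v) = ε^{−3/2} H(|v|²/ε) ρ₀(|x|). -/
def osF0 (ε : ℝ) (H ρ₀ : ℝ → ℝ) (x v : E3) : ℝ :=
  ε ^ (-(3:ℝ)/2) * H (‖v‖ ^ 2 / ε) * ρ₀ ‖x‖

/-- The mass-energy density ρ̊ induced by the Oppenheimer–Snyder-approximating data. -/
def osRho0 (ε : ℝ) (H ρ₀ : ℝ → ℝ) (s : ℝ) : ℝ := rho (fun _ => osF0 ε H ρ₀) 0 s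

/-- β̊(r) = ((8π/r)∫₀^r ρ̊(s) s² ds)^{1/2}. -/
def osBeta0 (ε : ℝ) (H ρ₀ : ℝ → ℝ) (r : ℝ) : ℝ :=
  Real.sqrt ((8 * π / r) * ∫ s in (0:ℝ)..r, osRho0 ε H ρ₀ s * s ^ 2)

/-- (f,a,β) is launched by the Oppenheimer–Snyder-approximating data. -/
def OSLaunch (ε : ℝ) (H ρ₀ : ℝ → ℝ) (f : ℝ → E3 → E3 → ℝ) (a β : ℝ → ℝ → ℝ) : Prop :=
  Launches f a β (osF0 ε H ρ₀) (fun _ => 1) (osBeta0 ε H ρ₀)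

/-- Bootstrap assumptions (i)–(iv) on [0,T). -/
def Bootstrap (T ε : ℝ) (H ρ₀ : ℝ → ℝ) (f : ℝ → E3 → E3 → ℝ) (a β : ℝ → ℝ → ℝ) : Prop :=
  (∀ t ∈ Ico (0:ℝ) T, ∀ r : ℝ, 0 ≤ r → dr β t r < sigmaD t) ∧
  (∀ t ∈ Ico (0:ℝ) T, ∀ r : ℝ, 0 ≤ r → -1 < β t r) ∧
  (∀ t ∈ Ico (0:ℝ) T, ∀ r : ℝ, 0 ≤ r → 1/2 < a t r ∧ a t r < 2) ∧
  (∀ x v : ℝ → E3, IsChar (Ico 0 T) a β (jmom f) x v →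
    osF0 ε H ρ₀ (x 0) (v 0) ≠ 0 →
    ∀ t ∈ Ico (0:ℝ) T, (1 - t) ^ ((2:ℝ)/3) * ‖v t‖ ≤ 2 * ‖v 0‖)

/-- φ_ε(ξ) = 4π α_ε ∫₀^∞ √(ξ²+εu²) H(u²) u² du. -/
def phiEps (ε : ℝ) (H : ℝ → ℝ) (ξ : ℝ) : ℝ :=
  4 * π * alphaEps ε * ∫ u in Ioi (0:ℝ), Real.sqrt (ξ ^ 2 + ε * u ^ 2) * H (u ^ 2) * u ^ 2

/-- ψ_ε(ξ) = (4π/3) α_ε ε ∫₀^∞ (u²/√(ξ²+εu²)) H(u²) u² du. -/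
def psiEps (ε : ℝ) (H : ℝ → ℝ) (ξ : ℝ) : ℝ :=
  (4 * π / 3) * alphaEps ε * ε *
    ∫ u in Ioi (0:ℝ), u ^ 2 / Real.sqrt (ξ ^ 2 + ε * u ^ 2) * H (u ^ 2) * u ^ 2

/-- (γ, γ') solves the homogeneous Vlasov scale-function ODE
γ'' = −(4π/3)(φ_ε(γ)+3ψ_ε(γ))/γ³, γ(0)=1, γ'(0) = −√((8π/3)φ_ε(1)) on I. -/
def GammaVSol (ε : ℝ) (H : ℝ → ℝ) (I : Set ℝ) (γ γ' : ℝ → ℝ) : Prop :=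
  (∀ t ∈ I, 0 < γ t) ∧
  (∀ t ∈ I, HasDerivWithinAt γ (γ' t) I t ∧
    HasDerivWithinAt γ'
      (-(4 * π / 3) * (phiEps ε H (γ t) + 3 * psiEps ε H (γ t)) / (γ t) ^ 3) I t) ∧
  γ 0 = 1 ∧ γ' 0 = -Real.sqrt ((8 * π / 3) * phiEps ε H 1)

/-- r*(t) = (1−3ε^{1/4})(1−t)^{2/3} + 3ε^{1/4}(1−t). -/
def rstar (ε t : ℝ) : ℝ :=
  (1 - 3 * ε ^ ((1:ℝ)/4)) * (1 - t) ^ ((2:ℝ)/3) + 3 * ε ^ ((1:ℝ)/4) * (1 - t)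

end EV

/-!
Along `γ' = -σγ` the scaling identity `ξ φ'(ξ) = φ(ξ) - 3ψ(ξ)`, obtained by differentiating
under the integral sign, turns into the continuity equation `ρ' = 3σ(ρ + p)`. Together with
`σ' = 4π(ρ + p)` it gives `(σ² - (8π/3)ρ)' = 8πσ(ρ + p) - 8πσ(ρ + p) = 0`, so the constraint,
imposed at `t = 0`, holds on all of `[0, T)`.
-/

namespace EV

open Topology

section EnergyMoment

variable {μ : Measure ℝ} [IsFiniteMeasureOnCompacts μ] {w : ℝ → ℝ}

theorem hasDerivAt_sqrt_sq_add {c x : ℝ} (hx : x ^ 2 + c ≠ 0) :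
    HasDerivAt (fun y => √(y ^ 2 + c)) (x / √(x ^ 2 + c)) x := by
  convert ((hasDerivAt_pow 2 x).add_const c).sqrt hx using 1
  field_simp
  ring

theorem hasDerivAt_integral_sqrt_sq_add_mul (hw : Continuous w) (hws : HasCompactSupport w)
    {ξ : ℝ} (hξ : ξ ≠ 0) :
    HasDerivAt (fun x => ∫ u, √(x ^ 2 + u ^ 2) * w u ∂μ)
      (∫ u, ξ / √(ξ ^ 2 + u ^ 2) * w u ∂μ) ξ := by
  have hsqrt : ∀ x u : ℝ, x ≠ 0 → √(x ^ 2 + u ^ 2) ≠ 0 := fun x u hx => by positivity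
  have hF : ∀ x, Continuous fun u => √(x ^ 2 + u ^ 2) * w u := fun x => by fun_prop
  have hF' : Continuous fun u => ξ / √(ξ ^ 2 + u ^ 2) * w u :=
    (continuous_const.div (by fun_prop) (hsqrt ξ · hξ)).mul hw
  refine (hasDerivAt_integral_of_dominated_loc_of_deriv_le (isOpen_ne.mem_nhds hξ)
    (Eventually.of_forall fun x => (hF x).aestronglyMeasurable)
    ((hF ξ).integrable_of_hasCompactSupport hws.mul_left) hF'.aestronglyMeasurable
    (F' := fun x u => x / √(x ^ 2 + u ^ 2) * w u) (bound := fun u => |w u|)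
    (Eventually.of_forall fun u x _ => ?_)
    (hw.abs.integrable_of_hasCompactSupport hws.abs)
    (Eventually.of_forall fun u x hx => ?_)).2
  · rw [norm_mul, Real.norm_eq_abs, abs_div, abs_of_nonneg (Real.sqrt_nonneg _)]
    refine mul_le_of_le_one_left (abs_nonneg _) (div_le_one_of_le₀ ?_ (Real.sqrt_nonneg _))
    exact Real.abs_le_sqrt (by nlinarith)
  · exact (hasDerivAt_sqrt_sq_add (by have : x ≠ 0 := hx; positivity)).mul_const (w u)

theorem integral_sqrt_sq_add_mul_sub_integral (hw : Continuous w) (hws : HasCompactSupport w)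
    {ξ : ℝ} (hξ : ξ ≠ 0) :
    ∫ u, √(ξ ^ 2 + u ^ 2) * w u ∂μ - ∫ u, u ^ 2 / √(ξ ^ 2 + u ^ 2) * w u ∂μ
      = ξ * ∫ u, ξ / √(ξ ^ 2 + u ^ 2) * w u ∂μ := by
  have hsqrt : ∀ u : ℝ, √(ξ ^ 2 + u ^ 2) ≠ 0 := fun u => by positivity
  have h₁ : Continuous fun u => √(ξ ^ 2 + u ^ 2) * w u := by fun_prop
  have h₂ : Continuous fun u => u ^ 2 / √(ξ ^ 2 + u ^ 2) * w u :=
    ((continuous_pow 2).div (by fun_prop) hsqrt).mul hw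
  rw [← integral_sub (h₁.integrable_of_hasCompactSupport hws.mul_left)
    (h₂.integrable_of_hasCompactSupport hws.mul_left), ← integral_const_mul]
  refine integral_congr_ae (Eventually.of_forall fun u => ?_)
  have hsq : √(ξ ^ 2 + u ^ 2) ^ 2 = ξ ^ 2 + u ^ 2 := Real.sq_sqrt (by positivity)
  field_simp [hsqrt u]
  linear_combination w u * hsq

theorem hasDerivAt_integral_sqrt_sq_add_mul' (hw : Continuous w) (hws : HasCompactSupport w)
    {ξ : ℝ} (hξ : ξ ≠ 0) :
    HasDerivAt (fun x => ∫ u, √(x ^ 2 + u ^ 2) * w u ∂μ)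
      ((∫ u, √(ξ ^ 2 + u ^ 2) * w u ∂μ - ∫ u, u ^ 2 / √(ξ ^ 2 + u ^ 2) * w u ∂μ) / ξ) ξ := by
  rw [integral_sqrt_sq_add_mul_sub_integral hw hws hξ, mul_div_cancel_left₀ _ hξ]
  exact hasDerivAt_integral_sqrt_sq_add_mul hw hws hξ

end EnergyMoment

theorem hasCompactSupport_comp_sq {H : ℝ → ℝ} (hH : ∃ M, ∀ η, M ≤ η → H η = 0) :
    HasCompactSupport fun u : ℝ => H (u ^ 2) := by
  obtain ⟨M, hM⟩ := hH
  refine HasCompactSupport.intro (isCompact_Icc (a := -(|M| + 1)) (b := |M| + 1)) fun u hu => ?_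
  have hu : |M| + 1 < |u| := by
    by_contra! h
    exact hu (abs_le.mp h)
  exact hM _ (by nlinarith [le_abs_self M, abs_nonneg M, sq_abs u])

theorem hasDerivWithinAt_intervalIntegral_Ico {f : ℝ → ℝ} {a b s : ℝ}
    (hf : ContinuousOn f (Ico a b)) (hs : s ∈ Ico a b) :
    HasDerivWithinAt (fun t => ∫ τ in a..t, f τ) (f s) (Ico a b) s := by
  have hint : IntervalIntegrable f volume a s :=
    (hf.mono fun x hx => ⟨hx.1, hx.2.trans_lt hs.2⟩).intervalIntegrable_of_Icc hs.1
  rcases hs.1.eq_or_lt with rfl | has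
  · have hmem : Ico a b ∈ 𝓝[>] a := Ico_mem_nhdsGT hs.2
    exact (intervalIntegral.integral_hasDerivWithinAt_right hint
      ((hf.stronglyMeasurableAtFilter_nhdsWithin measurableSet_Ico a).filter_mono
        (nhdsWithin_le_of_mem hmem))
      ((hf a hs).mono_of_mem_nhdsWithin hmem)).mono Ico_subset_Ici_self
  · have hmem : Ico a b ∈ 𝓝 s := Ico_mem_nhds has hs.2
    exact (intervalIntegral.integral_hasDerivAt_right hint
      (hf.stronglyMeasurableAtFilter_nhdsWithin measurableSet_Ico s |>.filter_mono
        (by rw [nhdsWithin_eq_nhds.2 hmem]))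
      ((hf s hs).continuousAt hmem)).hasDerivWithinAt

theorem hasDerivWithinAt_div_pow_four {φ ψ γ : ℝ → ℝ} {I : Set ℝ} {s σ : ℝ} (hγs : γ s ≠ 0)
    (hφ : HasDerivAt φ ((φ (γ s) - 3 * ψ (γ s)) / γ s) (γ s))
    (hγ : HasDerivWithinAt γ (-σ * γ s) I s) :
    HasDerivWithinAt (fun t => φ (γ t) / γ t ^ 4)
      (3 * σ * (φ (γ s) / γ s ^ 4 + ψ (γ s) / γ s ^ 4)) I s := by
  refine ((hφ.comp_hasDerivWithinAt s hγ).fun_div (hγ.fun_pow 4) (pow_ne_zero 4 hγs)).congr_deriv ?_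
  simp only [Function.comp_apply]
  field_simp
  ring

theorem friedmann_constraint_const {I : Set ℝ} (hI : Convex ℝ I) {σ ρ p : ℝ → ℝ}
    (hσ : ∀ t ∈ I, HasDerivWithinAt σ (4 * π * (ρ t + p t)) I t)
    (hρ : ∀ t ∈ I, HasDerivWithinAt ρ (3 * σ t * (ρ t + p t)) I t) {s t : ℝ}
    (hs : s ∈ I) (ht : t ∈ I) :
    σ t ^ 2 - 8 * π / 3 * ρ t = σ s ^ 2 - 8 * π / 3 * ρ s := by
  have hW : ∀ x ∈ I, HasDerivWithinAt (fun x => σ x ^ 2 - 8 * π / 3 * ρ x) 0 I x :=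
    fun x hx => by
      refine (((hσ x hx).fun_pow 2).sub ((hρ x hx).const_mul (8 * π / 3))).congr_deriv ?_
      push_cast
      ring
  simpa [sub_eq_zero] using
    hI.norm_image_sub_le_of_norm_hasDerivWithin_le hW (fun _ _ => norm_zero.le) hs ht

theorem homogeneous_constraint_propagation_general
    (T : ℝ) (H : ℝ → ℝ)
    (hHc1 : ContDiffOn ℝ 1 H (Ici 0))
    (hHnn : ∀ η : ℝ, 0 ≤ η → 0 ≤ H η)
    (hHsupp : ∃ M : ℝ, ∀ η : ℝ, M ≤ η → H η = 0)
    (σ : ℝ → ℝ) :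
    let φ : ℝ → ℝ := fun ξ =>
      4 * π * ∫ u in Ioi (0:ℝ), Real.sqrt (ξ ^ 2 + u ^ 2) * H (u ^ 2) * u ^ 2
    let ψ : ℝ → ℝ := fun ξ =>
      (4 * π / 3) * ∫ u in Ioi (0:ℝ), u ^ 2 / Real.sqrt (ξ ^ 2 + u ^ 2) * H (u ^ 2) * u ^ 2
    let γ : ℝ → ℝ := fun t => Real.exp (-(∫ τ in (0:ℝ)..t, σ τ))
    let ρ : ℝ → ℝ := fun t => φ (γ t) / (γ t) ^ 4
    let p : ℝ → ℝ := fun t => ψ (γ t) / (γ t) ^ 4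
    (∀ t ∈ Ico (0:ℝ) T, HasDerivWithinAt σ (4 * π * (ρ t + p t)) (Ico 0 T) t) →
    σ 0 = Real.sqrt ((8 * π / 3) * ρ 0) →
    ∀ t ∈ Ico (0:ℝ) T, (σ t) ^ 2 = (8 * π / 3) * ρ t := by
  intro φ ψ γ ρ p hσ hσ0 t ht
  set w : ℝ → ℝ := fun u => H (u ^ 2) * u ^ 2
  have hw : Continuous w :=
    (hHc1.continuousOn.comp_continuous (continuous_pow 2) sq_nonneg).mul (continuous_pow 2)
  have hws : HasCompactSupport w := (hasCompactSupport_comp_sq hHsupp).mul_right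
  have hφ : ∀ ξ : ℝ, 0 < ξ → HasDerivAt φ ((φ ξ - 3 * ψ ξ) / ξ) ξ := fun ξ hξ => by
    have h := (hasDerivAt_integral_sqrt_sq_add_mul' (μ := volume.restrict (Ioi 0))
      hw hws hξ.ne').const_mul (4 * π)
    simp only [w, ← mul_assoc] at h
    exact h.congr_deriv (by ring)
  have hσc : ContinuousOn σ (Ico 0 T) := fun s hs => (hσ s hs).continuousWithinAt
  have hγ : ∀ s ∈ Ico (0:ℝ) T, HasDerivWithinAt γ (-σ s * γ s) (Ico 0 T) s := fun s hs =>
    ((hasDerivWithinAt_intervalIntegral_Ico hσc hs).neg.exp).congr_deriv (mul_comm _ _)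
  have hρ : ∀ s ∈ Ico (0:ℝ) T, HasDerivWithinAt ρ (3 * σ s * (ρ s + p s)) (Ico 0 T) s :=
    fun s hs => hasDerivWithinAt_div_pow_four (exp_pos _).ne' (hφ _ (exp_pos _)) (hγ s hs)
  have hρ₀ : 0 ≤ ρ 0 := div_nonneg (mul_nonneg (by positivity) (setIntegral_nonneg
    measurableSet_Ioi fun u _ => by have := hHnn _ (sq_nonneg u); positivity)) (by positivity)
  have h₀ : σ 0 ^ 2 = 8 * π / 3 * ρ 0 := by rw [hσ0, sq_sqrt (by positivity)]
  have := friedmann_constraint_const (convex_Ico 0 T) hσ hρ ⟨le_rfl, ht.1.trans_lt ht.2⟩ ht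
  linarith

/-- propagation of the Hamiltonian constraint σ² = (8π/3)ρ by the
evolution equation σ' = 4π(ρ+p) for the homogeneous Vlasov scale system. -/
theorem homogeneous_constraint_propagation
    (T : ℝ) (hT : 0 < T) (H : ℝ → ℝ)
    (hHc1 : ContDiffOn ℝ 1 H (Ici 0))
    (hHnn : ∀ η : ℝ, 0 ≤ η → 0 ≤ H η)
    (hHsupp : ∃ M : ℝ, ∀ η : ℝ, M ≤ η → H η = 0)
    (σ : ℝ → ℝ) :
    let φ : ℝ → ℝ := fun ξ =>
      4 * π * ∫ u in Ioi (0:ℝ), Real.sqrt (ξ ^ 2 + u ^ 2) * H (u ^ 2) * u ^ 2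
    let ψ : ℝ → ℝ := fun ξ =>
      (4 * π / 3) * ∫ u in Ioi (0:ℝ), u ^ 2 / Real.sqrt (ξ ^ 2 + u ^ 2) * H (u ^ 2) * u ^ 2
    let γ : ℝ → ℝ := fun t => Real.exp (-(∫ τ in (0:ℝ)..t, σ τ))
    let ρ : ℝ → ℝ := fun t => φ (γ t) / (γ t) ^ 4
    let p : ℝ → ℝ := fun t => ψ (γ t) / (γ t) ^ 4
    (∀ t ∈ Ico (0:ℝ) T, HasDerivWithinAt σ (4 * π * (ρ t + p t)) (Ico 0 T) t) →
    σ 0 = Real.sqrt ((8 * π / 3) * ρ 0) →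
    ∀ t ∈ Ico (0:ℝ) T, (σ t) ^ 2 = (8 * π / 3) * ρ t :=
  homogeneous_constraint_propagation_general T H hHc1 hHnn hHsupp σ

end EV
end
end

section
/- Let 0 < T < 1. Then for every sufficiently small ε > 0 the solution γ_{V,ε} exists on [0,T], and for all t ∈ (0,T]: (a) γ_{V,ε}(t) > γ_D(t), and (b) σ_{V,ε}(t) < σ_D(t), where γ_D(t) = (1−t)^{2/3}, σ_D(t) = −γ_D'(t)/γ_D(t) = (2/3)/(1−t), and σ_{V,ε} = −γ_{V,ε}'/γ_{V,ε}. -/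
noncomputable section

open Real MeasureTheory Set Filter

namespace EV


/-!
Write `u = γ' + σ_D γ`; the claim `σ_V < σ_D` says `u > 0`, and `(γ / γ_D)' = u / γ_D`, so
`γ ≥ γ_D` as long as `u ≥ 0`. At a first zero of `u` one has `γ' = -σ_D γ`, whence
`u' = γ'' + σ_D² γ / 2` because `σ_D' = 3 σ_D² / 2`. The moment bounds
`φ_ε + 3 ψ_ε ≤ α_ε (γ + 2 √ε)` and `γ³ ≥ γ_D³ = (1 - t)²` make this positive as soon as
`4 ε^{3/10} ≤ γ_D(T)`, a contradiction. Existence on `[0, T]` comes from Picard–Lindelöf applied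
with the right-hand side frozen outside `[γ_D(T), 1]`, which is globally Lipschitz; the
comparison shows that the solution never leaves this range.
-/

open Topology

lemma abs_sqrt_sq_add_sub_le (a b : ℝ) {c : ℝ} (hc : 0 ≤ c) :
    |√(a ^ 2 + c) - √(b ^ 2 + c)| ≤ |a - b| := by
  have key : ∀ x y : ℝ, √(x ^ 2 + c) ≤ √(y ^ 2 + c) + |x - y| := fun x y => by
    refine Real.sqrt_le_iff.mpr ⟨by positivity, ?_⟩
    have hy : y * (x - y) ≤ √(y ^ 2 + c) * |x - y| :=
      (le_abs_self _).trans (abs_mul y (x - y) ▸ mul_le_mul_of_nonneg_right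
        (Real.abs_le_sqrt (by linarith)) (abs_nonneg _))
    nlinarith [Real.sq_sqrt (by positivity : 0 ≤ y ^ 2 + c), sq_abs (x - y)]
  rw [abs_sub_le_iff]
  exact ⟨by linarith [key a b], by linarith [key b a, abs_sub_comm a b]⟩

lemma sqrt_mul_le_sqrt_sq_add (ξ : ℝ) {ε u : ℝ} (hε : 0 ≤ ε) (hu : 0 ≤ u) :
    √ε * u ≤ √(ξ ^ 2 + ε * u ^ 2) := by
  calc √ε * u = √(ε * u ^ 2) := by rw [Real.sqrt_mul hε, Real.sqrt_sq hu]
    _ ≤ √(ξ ^ 2 + ε * u ^ 2) := Real.sqrt_le_sqrt (by nlinarith [sq_nonneg ξ])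

lemma abs_sq_div_sqrt_sub_le (a b : ℝ) {ε u : ℝ} (hε0 : 0 < ε) (hu : 0 < u) :
    |u ^ 2 / √(a ^ 2 + ε * u ^ 2) - u ^ 2 / √(b ^ 2 + ε * u ^ 2)| ≤ |a - b| / ε := by
  have hA := sqrt_mul_le_sqrt_sq_add a hε0.le hu.le
  have hB := sqrt_mul_le_sqrt_sq_add b hε0.le hu.le
  have hsu : 0 < √ε * u := mul_pos (Real.sqrt_pos.mpr hε0) hu
  have hA0 := hsu.trans_le hA
  have hB0 := hsu.trans_le hB
  rw [div_sub_div _ _ hA0.ne' hB0.ne', abs_div, abs_of_pos (mul_pos hA0 hB0),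
    div_le_div_iff₀ (mul_pos hA0 hB0) hε0]
  calc |u ^ 2 * √(b ^ 2 + ε * u ^ 2) - √(a ^ 2 + ε * u ^ 2) * u ^ 2| * ε
      = u ^ 2 * |√(a ^ 2 + ε * u ^ 2) - √(b ^ 2 + ε * u ^ 2)| * ε := by
        rw [← abs_neg, show -(u ^ 2 * √(b ^ 2 + ε * u ^ 2) - √(a ^ 2 + ε * u ^ 2) * u ^ 2)
          = u ^ 2 * (√(a ^ 2 + ε * u ^ 2) - √(b ^ 2 + ε * u ^ 2)) by ring, abs_mul,
          abs_of_nonneg (sq_nonneg u)]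
    _ ≤ u ^ 2 * |a - b| * ε :=
        mul_le_mul_of_nonneg_right (mul_le_mul_of_nonneg_left
          (abs_sqrt_sq_add_sub_le a b (mul_nonneg hε0.le (sq_nonneg u))) (sq_nonneg u)) hε0.le
    _ = |a - b| * ((√ε * u) * (√ε * u)) := by
        rw [mul_mul_mul_comm, Real.mul_self_sqrt hε0.le]; ring
    _ ≤ |a - b| * (√(a ^ 2 + ε * u ^ 2) * √(b ^ 2 + ε * u ^ 2)) := by gcongr

lemma abs_div_pow_three_sub_le {m a b A B K M : ℝ} (hm : 0 < m) (ha : a ∈ Icc m 1)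
    (hb : b ∈ Icc m 1) (hAB : |A - B| ≤ K * |a - b|) (hB0 : 0 ≤ B) (hB : B ≤ M) :
    |A / a ^ 3 - B / b ^ 3| ≤ (K + 3 * M) / m ^ 6 * |a - b| := by
  have ha0 : 0 < a := hm.trans_le ha.1
  have hb0 : 0 < b := hm.trans_le hb.1
  have hm6 : m ^ 6 ≤ a ^ 3 * b ^ 3 := by
    rw [show m ^ 6 = m ^ 3 * m ^ 3 by ring]
    exact mul_le_mul (pow_le_pow_left₀ hm.le ha.1 3) (pow_le_pow_left₀ hm.le hb.1 3)
      (by positivity) (by positivity)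
  have ha3 : m ^ 6 ≤ a ^ 3 := (pow_le_pow_of_le_one hm.le (ha.1.trans ha.2) (by norm_num)).trans
    (pow_le_pow_left₀ hm.le ha.1 3)
  have hcube : |b ^ 3 - a ^ 3| ≤ 3 * |a - b| := by
    rw [show b ^ 3 - a ^ 3 = -((a - b) * (a ^ 2 + a * b + b ^ 2)) by ring, abs_neg, abs_mul,
      abs_of_pos (show 0 < a ^ 2 + a * b + b ^ 2 by positivity), mul_comm]
    gcongr
    nlinarith [ha.2, hb.2]
  have hsplit :
      A / a ^ 3 - B / b ^ 3 = (A - B) / a ^ 3 + B * (b ^ 3 - a ^ 3) / (a ^ 3 * b ^ 3) := by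
    field_simp; ring
  rw [hsplit]
  calc |(A - B) / a ^ 3 + B * (b ^ 3 - a ^ 3) / (a ^ 3 * b ^ 3)|
      ≤ K * |a - b| / m ^ 6 + M * (3 * |a - b|) / m ^ 6 := by
        refine (abs_add_le _ _).trans (add_le_add ?_ ?_)
        · rw [abs_div, abs_of_pos (show 0 < a ^ 3 by positivity)]
          exact div_le_div₀ ((abs_nonneg _).trans hAB) hAB (by positivity) ha3
        · rw [abs_div, abs_of_pos (show 0 < a ^ 3 * b ^ 3 by positivity), abs_mul,
            abs_of_nonneg hB0]
          exact div_le_div₀ (mul_nonneg (hB0.trans hB) (by positivity))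
            (mul_le_mul hB hcube (abs_nonneg _) (hB0.trans hB))
            (by positivity) hm6
    _ = (K + 3 * M) / m ^ 6 * |a - b| := by ring

lemma IsMinOn.hasDerivWithinAt_nonpos_Icc {u : ℝ → ℝ} {u' a t : ℝ} (hat : a < t)
    (hmin : IsMinOn u (Icc a t) t) (hu : HasDerivWithinAt u u' (Icc a t) t) : u' ≤ 0 := by
  have hcone : a - t ∈ posTangentConeAt (Icc a t) t :=
    mem_posTangentConeAt_of_segment_subset (by
      rw [add_sub_cancel, segment_symm]
      exact segment_subset_Icc hat.le)
  have h : 0 ≤ (a - t) * u' := by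
    simpa using hmin.localize.hasFDerivWithinAt_nonneg hu.hasFDerivWithinAt hcone
  nlinarith

theorem pos_of_hasDerivWithinAt_pos_at_first_zero {u u' : ℝ → ℝ} {a b : ℝ}
    (hu : ∀ t ∈ Icc a b, HasDerivWithinAt u (u' t) (Icc a b) t) (ha : 0 < u a)
    (hzero : ∀ t ∈ Ioc a b, (∀ s ∈ Ico a t, 0 < u s) → u t = 0 → 0 < u' t) :
    ∀ t ∈ Icc a b, 0 < u t := by
  by_contra! hneg
  have hcont : ContinuousOn u (Icc a b) := fun t ht => (hu t ht).continuousWithinAt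
  set Z := {s ∈ Icc a b | u s ≤ 0}
  have hZ : IsClosed Z := hcont.preimage_isClosed_of_isClosed isClosed_Icc isClosed_Iic
  have hZne : Z.Nonempty := hneg
  have hZbdd : BddBelow Z := ⟨a, fun s hs => hs.1.1⟩
  set t₁ := sInf Z
  obtain ⟨⟨hat₁, ht₁b⟩, hut₁⟩ : t₁ ∈ Z := hZ.csInf_mem hZne hZbdd
  have hbefore : ∀ s ∈ Ico a t₁, 0 < u s := fun s hs => by
    by_contra! hus
    exact (csInf_le hZbdd ⟨⟨hs.1, hs.2.le.trans ht₁b⟩, hus⟩).not_gt hs.2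
  have hat : a < t₁ := hat₁.lt_of_ne fun h => by rw [← h] at hut₁; linarith
  have hsub : Icc a t₁ ⊆ Icc a b := Icc_subset_Icc le_rfl ht₁b
  have hut₁0 : u t₁ = 0 := by
    refine le_antisymm hut₁ ?_
    have : (𝓝[Ico a t₁] t₁).NeBot := by
      rw [← mem_closure_iff_nhdsWithin_neBot, closure_Ico hat.ne]
      exact right_mem_Icc.mpr hat.le
    exact ge_of_tendsto ((hcont t₁ ⟨hat₁, ht₁b⟩).mono (Ico_subset_Icc_self.trans hsub))
      (eventually_nhdsWithin_of_forall fun s hs => (hbefore s hs).le)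
  have hmin : IsMinOn u (Icc a t₁) t₁ := isMinOn_iff.mpr fun s hs => by
    rcases hs.2.lt_or_eq with h | h
    · rw [hut₁0]; exact (hbefore s ⟨hs.1, h⟩).le
    · rw [h]
  have hderiv := IsMinOn.hasDerivWithinAt_nonpos_Icc hat hmin ((hu t₁ ⟨hat₁, ht₁b⟩).mono hsub)
  exact (hzero t₁ ⟨hat, ht₁b⟩ hbefore hut₁0).not_ge hderiv

lemma antitoneOn_Icc_of_hasDerivWithinAt_nonpos {a b : ℝ} {f f' : ℝ → ℝ}
    (hf : ∀ t ∈ Icc a b, HasDerivWithinAt f (f' t) (Icc a b) t)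
    (hf' : ∀ t ∈ Icc a b, f' t ≤ 0) : AntitoneOn f (Icc a b) :=
  antitoneOn_of_hasDerivWithinAt_nonpos (convex_Icc a b)
    (fun t ht => (hf t ht).continuousWithinAt)
    (fun t ht => (hf t (interior_subset ht)).mono interior_subset)
    (fun t ht => hf' t (interior_subset ht))

open scoped NNReal in
lemma exists_hasDerivWithinAt_of_lipschitzWith {E : Type*} [NormedAddCommGroup E]
    [NormedSpace ℝ E] [CompleteSpace E] {F : E → E} {K : ℝ≥0} (hF : LipschitzWith K F)
    {x₀ : E} {L T : ℝ} (hL : 0 ≤ L) (hT : 0 ≤ T)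
    (hbound : ∀ y ∈ Metric.closedBall x₀ (L * T), ‖F y‖ ≤ L) :
    ∃ α : ℝ → E, α 0 = x₀ ∧ ∀ t ∈ Icc 0 T, HasDerivWithinAt α (F (α t)) (Icc 0 T) t := by
  have hpl : IsPicardLindelof (fun _ => F) (⟨0, le_rfl, hT⟩ : Icc (0:ℝ) T) x₀
      (L * T).toNNReal 0 L.toNNReal K := by
    refine .of_time_independent ?_ hF.lipschitzOnWith ?_ <;>
      simp only [Real.coe_toNNReal _ hL, Real.coe_toNNReal _ (mul_nonneg hL hT)]
    · exact hbound
    · simp [max_eq_left hT]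
  exact hpl.exists_eq_forall_mem_Icc_hasDerivWithinAt₀

open scoped NNReal in
/-- Rescaling the velocity by `T + 1` makes the time condition of Picard–Lindelöf hold on all
of `[0, T]`. -/
theorem exists_hasDerivWithinAt_second_order {g : ℝ → ℝ} {K : ℝ≥0} (hg : LipschitzWith K g)
    {C : ℝ} (hC : ∀ x, |g x| ≤ C) (x₀ p₀ : ℝ) {T : ℝ} (hT : 0 ≤ T) :
    ∃ x p : ℝ → ℝ, x 0 = x₀ ∧ p 0 = p₀ ∧ ∀ t ∈ Icc 0 T,
      HasDerivWithinAt x (p t) (Icc 0 T) t ∧ HasDerivWithinAt p (g (x t)) (Icc 0 T) t := by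
  set c := T + 1
  have hc : 0 < c := by positivity
  have hC0 : 0 ≤ C := (abs_nonneg _).trans (hC 0)
  set F : ℝ × ℝ → ℝ × ℝ := fun y => (c⁻¹ • y.2, c • g y.1)
  have hF : LipschitzWith _ F := ((lipschitzWith_smul c⁻¹).comp LipschitzWith.prod_snd).prodMk
    ((lipschitzWith_smul c).comp (hg.comp LipschitzWith.prod_fst))
  set L := c * (|p₀| + c * C)
  have hbound : ∀ y ∈ Metric.closedBall (x₀, c * p₀) (L * T), ‖F y‖ ≤ L := by
    intro y hy
    have hy2 : |y.2| ≤ c * |p₀| + L * T := by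
      have := (abs_sub_abs_le_abs_sub y.2 (c * p₀)).trans
        ((le_max_right _ _).trans (by simpa [Prod.dist_eq, Real.dist_eq] using hy))
      rwa [abs_mul, abs_of_pos hc, tsub_le_iff_left] at this
    refine max_le ?_ ?_
    · rw [Real.norm_eq_abs, show (F y).1 = c⁻¹ * y.2 from rfl, abs_mul, abs_inv, abs_of_pos hc,
        inv_mul_le_iff₀ hc]
      nlinarith [abs_nonneg p₀, mul_nonneg hc.le hC0]
    · rw [Real.norm_eq_abs, show (F y).2 = c * g y.1 from rfl, abs_mul, abs_of_pos hc]
      have h1c : 1 ≤ c := by linarith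
      exact mul_le_mul_of_nonneg_left (by nlinarith [hC y.1, abs_nonneg p₀]) hc.le
  obtain ⟨α, hα0, hα⟩ := exists_hasDerivWithinAt_of_lipschitzWith hF (by positivity) hT hbound
  refine ⟨fun t => (α t).1, fun t => c⁻¹ * (α t).2, by simp [hα0], by simp [hα0, hc.ne'],
    fun t ht => ⟨?_, ?_⟩⟩
  · exact (ContinuousLinearMap.fst ℝ ℝ ℝ).hasFDerivAt.comp_hasDerivWithinAt t (hα t ht)
  · refine (((ContinuousLinearMap.snd ℝ ℝ ℝ).hasFDerivAt.comp_hasDerivWithinAt t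
      (hα t ht)).const_mul c⁻¹).congr_deriv ?_
    simp [F, hc.ne']

lemma gammaD_pos {t : ℝ} (ht : t < 1) : 0 < gammaD t :=
  Real.rpow_pos_of_pos (by linarith) _

lemma gammaD_pow_three {t : ℝ} (ht : t ≤ 1) : gammaD t ^ 3 = (1 - t) ^ 2 := by
  rw [gammaD, ← Real.rpow_natCast, ← Real.rpow_mul (by linarith)]
  norm_num

lemma gammaD_anti {s t : ℝ} (hst : s ≤ t) (ht : t ≤ 1) : gammaD t ≤ gammaD s :=
  Real.rpow_le_rpow (by linarith) (by linarith) (by norm_num)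

lemma gammaD_zero : gammaD 0 = 1 := by simp [gammaD]

lemma hasDerivAt_gammaD {t : ℝ} (ht : t < 1) :
    HasDerivAt gammaD (-(sigmaD t * gammaD t)) t := by
  have h0 : (0:ℝ) < 1 - t := by linarith
  refine (((hasDerivAt_id t).const_sub 1).rpow_const (p := (2:ℝ) / 3)
    (Or.inl h0.ne')).congr_deriv ?_
  rw [id, show (2:ℝ) / 3 - 1 = -1 + 2 / 3 by norm_num, Real.rpow_add h0, Real.rpow_neg_one]
  unfold sigmaD gammaD
  field_simp

lemma hasDerivAt_sigmaD {t : ℝ} (ht : t < 1) :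
    HasDerivAt sigmaD (3 / 2 * sigmaD t ^ 2) t := by
  have h0 : (1:ℝ) - t ≠ 0 := by linarith
  refine ((hasDerivAt_const t ((2:ℝ) / 3)).div ((hasDerivAt_id t).const_sub 1) h0).congr_deriv ?_
  rw [id]
  unfold sigmaD
  field_simp
  ring

lemma HasDerivAt.div_gammaD {γ : ℝ → ℝ} {p t : ℝ} (hγ : HasDerivAt γ p t) (ht : t < 1) :
    HasDerivAt (fun s => γ s / gammaD s) ((p + sigmaD t * γ t) / gammaD t) t := by
  refine (hγ.div (hasDerivAt_gammaD ht) (gammaD_pos ht).ne').congr_deriv ?_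
  field_simp
  ring

section Moments

variable {H : ℝ → ℝ} {ε : ℝ}

lemma HProps.sq_eq_zero (hH : HProps H) {u : ℝ} (hu : 1 ≤ u) : H (u ^ 2) = 0 :=
  hH.vanish _ (by nlinarith)

lemma HProps.integral_mul_sq (hH : HProps H) :
    ∫ u in Ioi (0:ℝ), H (u ^ 2) * u ^ 2 = (4 * π)⁻¹ := by
  have h := integral_fun_norm_addHaar (volume : Measure E3) (fun y => H (y ^ 2))
  rw [hH.normalized, measureReal_def, EuclideanSpace.volume_ball_fin_three] at h
  simp only [finrank_euclideanSpace_fin, ENNReal.ofReal_one, one_pow, one_mul, nsmul_eq_mul,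
    smul_eq_mul, Nat.cast_ofNat, ENNReal.toReal_ofReal (by positivity : 0 ≤ π * 4 / 3)] at h
  have hswap : ∫ y in Ioi (0:ℝ), y ^ (3 - 1) * H (y ^ 2) = ∫ u in Ioi (0:ℝ), H (u ^ 2) * u ^ 2 :=
    setIntegral_congr_fun measurableSet_Ioi fun y _ => mul_comm _ _
  rw [hswap] at h
  exact eq_inv_of_mul_eq_one_left (by linear_combination -h)

lemma HProps.integrableOn_mul (hH : HProps H) {k : ℝ → ℝ} (hk : ContinuousOn k (Icc 0 1)) :
    IntegrableOn (fun u => k u * H (u ^ 2) * u ^ 2) (Ioi 0) := by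
  rw [← Ioc_union_Ioi_eq_Ioi zero_le_one]
  refine IntegrableOn.union ?_ ?_
  · refine (ContinuousOn.integrableOn_Icc ?_).mono_set Ioc_subset_Icc_self
    exact (hk.mul (hH.c1.continuousOn.comp (by fun_prop) fun u _ => sq_nonneg u)).mul
      (by fun_prop)
  · refine integrableOn_zero.congr_fun (fun u hu => ?_) measurableSet_Ioi
    simp [hH.sq_eq_zero (le_of_lt hu)]

lemma HProps.abs_integral_mul_le (hH : HProps H) {k : ℝ → ℝ} {c : ℝ}
    (hc : ∀ u ∈ Ioc (0:ℝ) 1, |k u| ≤ c) :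
    |∫ u in Ioi (0:ℝ), k u * H (u ^ 2) * u ^ 2| ≤ c / (4 * π) := by
  have hbound : ∀ u ∈ Ioi (0:ℝ), ‖k u * H (u ^ 2) * u ^ 2‖ ≤ c * H (u ^ 2) * u ^ 2 := by
    intro u hu
    rcases le_or_gt u 1 with h1 | h1
    · rw [Real.norm_eq_abs, abs_mul, abs_mul, abs_of_nonneg (hH.nonneg _ (sq_nonneg u)),
        abs_of_nonneg (sq_nonneg u)]
      gcongr
      · exact hH.nonneg _ (sq_nonneg u)
      · exact hc u ⟨hu, h1⟩
    · simp [hH.sq_eq_zero h1.le]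
  calc |∫ u in Ioi (0:ℝ), k u * H (u ^ 2) * u ^ 2|
      ≤ ∫ u in Ioi (0:ℝ), c * H (u ^ 2) * u ^ 2 :=
        norm_integral_le_of_norm_le (hH.integrableOn_mul continuousOn_const)
          ((ae_restrict_iff' measurableSet_Ioi).mpr (Eventually.of_forall hbound))
    _ = c / (4 * π) := by
        simp_rw [mul_assoc]
        rw [integral_const_mul, hH.integral_mul_sq, div_eq_mul_inv]

lemma alphaEps_nonneg (hε0 : 0 ≤ ε) (hε1 : ε ≤ 1) : 0 ≤ alphaEps ε :=
  div_nonneg (sub_nonneg.mpr (Real.rpow_le_one hε0 hε1 (by norm_num))) (by positivity)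

lemma alphaEps_le (hε0 : 0 ≤ ε) : alphaEps ε ≤ (6 * π)⁻¹ := by
  rw [alphaEps, div_eq_mul_inv]
  exact mul_le_of_le_one_left (by positivity) (by linarith [Real.rpow_nonneg hε0 (1 / 5)])

lemma phiEps_nonneg (hH : HProps H) (hε0 : 0 ≤ ε) (hε1 : ε ≤ 1) (ξ : ℝ) :
    0 ≤ phiEps ε H ξ :=
  mul_nonneg (mul_nonneg (by positivity) (alphaEps_nonneg hε0 hε1))
    (setIntegral_nonneg measurableSet_Ioi fun u _ =>
      mul_nonneg (mul_nonneg (Real.sqrt_nonneg _) (hH.nonneg _ (sq_nonneg u))) (sq_nonneg u))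

lemma psiEps_nonneg (hH : HProps H) (hε0 : 0 ≤ ε) (hε1 : ε ≤ 1) (ξ : ℝ) :
    0 ≤ psiEps ε H ξ :=
  mul_nonneg (mul_nonneg (mul_nonneg (by positivity) (alphaEps_nonneg hε0 hε1)) hε0)
    (setIntegral_nonneg measurableSet_Ioi fun u _ =>
      mul_nonneg (mul_nonneg (div_nonneg (sq_nonneg u) (Real.sqrt_nonneg _))
        (hH.nonneg _ (sq_nonneg u))) (sq_nonneg u))

lemma phiEps_le (hH : HProps H) (hε0 : 0 ≤ ε) (hε1 : ε ≤ 1) {ξ : ℝ} (hξ : 0 ≤ ξ) :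
    phiEps ε H ξ ≤ alphaEps ε * (ξ + √ε) := by
  have hint := hH.abs_integral_mul_le (k := fun u => √(ξ ^ 2 + ε * u ^ 2)) (c := ξ + √ε)
    fun u hu => by
      rw [abs_of_nonneg (Real.sqrt_nonneg _)]
      refine Real.sqrt_le_iff.mpr ⟨by positivity, ?_⟩
      have hu2 : u ^ 2 ≤ 1 := by nlinarith [hu.1, hu.2]
      nlinarith [Real.sq_sqrt hε0, mul_nonneg hξ (Real.sqrt_nonneg ε),
        mul_le_mul_of_nonneg_left hu2 hε0]
  calc phiEps ε H ξ
      ≤ 4 * π * alphaEps ε * ((ξ + √ε) / (4 * π)) :=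
        mul_le_mul_of_nonneg_left ((le_abs_self _).trans hint)
          (mul_nonneg (by positivity) (alphaEps_nonneg hε0 hε1))
    _ = alphaEps ε * (ξ + √ε) := by field_simp

lemma psiEps_le (hH : HProps H) (hε0 : 0 < ε) (hε1 : ε ≤ 1) (ξ : ℝ) :
    psiEps ε H ξ ≤ alphaEps ε * √ε / 3 := by
  have hsε : 0 < √ε := Real.sqrt_pos.mpr hε0
  have hint := hH.abs_integral_mul_le (k := fun u => u ^ 2 / √(ξ ^ 2 + ε * u ^ 2))
    (c := (√ε)⁻¹) fun u hu => by
      have hden := sqrt_mul_le_sqrt_sq_add ξ hε0.le hu.1.le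
      rw [abs_of_nonneg (by positivity), div_le_iff₀ (lt_of_lt_of_le (by nlinarith [hu.1]) hden)]
      calc u ^ 2 ≤ u * 1 := by nlinarith [hu.1, hu.2]
        _ = (√ε)⁻¹ * (√ε * u) := by field_simp
        _ ≤ (√ε)⁻¹ * √(ξ ^ 2 + ε * u ^ 2) := by gcongr
  calc psiEps ε H ξ
      ≤ 4 * π / 3 * alphaEps ε * ε * ((√ε)⁻¹ / (4 * π)) :=
        mul_le_mul_of_nonneg_left ((le_abs_self _).trans hint)
          (mul_nonneg (mul_nonneg (by positivity) (alphaEps_nonneg hε0.le hε1)) hε0.le)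
    _ = alphaEps ε * √ε / 3 := by
        field_simp
        linear_combination (-alphaEps ε) * Real.sq_sqrt hε0.le

lemma abs_phiEps_sub_le (hH : HProps H) (hε0 : 0 ≤ ε) (hε1 : ε ≤ 1) (a b : ℝ) :
    |phiEps ε H a - phiEps ε H b| ≤ alphaEps ε * |a - b| := by
  have hk : ∀ ξ : ℝ, ContinuousOn (fun u => √(ξ ^ 2 + ε * u ^ 2)) (Icc 0 1) :=
    fun ξ => by fun_prop
  have hsub : phiEps ε H a - phiEps ε H b = 4 * π * alphaEps ε *
      ∫ u in Ioi (0:ℝ), (√(a ^ 2 + ε * u ^ 2) - √(b ^ 2 + ε * u ^ 2)) * H (u ^ 2) * u ^ 2 := by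
    rw [phiEps, phiEps, ← mul_sub, ← integral_sub (hH.integrableOn_mul (hk a))
      (hH.integrableOn_mul (hk b))]
    simp_rw [sub_mul]
  have hint := hH.abs_integral_mul_le (c := |a - b|) fun u _ =>
    abs_sqrt_sq_add_sub_le a b (mul_nonneg hε0 (sq_nonneg u))
  rw [hsub, abs_mul, abs_of_nonneg (mul_nonneg (by positivity) (alphaEps_nonneg hε0 hε1))]
  calc 4 * π * alphaEps ε * |∫ u in Ioi (0:ℝ),
        (√(a ^ 2 + ε * u ^ 2) - √(b ^ 2 + ε * u ^ 2)) * H (u ^ 2) * u ^ 2|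
      ≤ 4 * π * alphaEps ε * (|a - b| / (4 * π)) :=
        mul_le_mul_of_nonneg_left hint (mul_nonneg (by positivity) (alphaEps_nonneg hε0 hε1))
    _ = alphaEps ε * |a - b| := by field_simp

lemma abs_psiEps_sub_le (hH : HProps H) (hε0 : 0 < ε) (hε1 : ε ≤ 1) {a b : ℝ}
    (ha : 0 < a) (hb : 0 < b) :
    |psiEps ε H a - psiEps ε H b| ≤ alphaEps ε / 3 * |a - b| := by
  have hk : ∀ ξ : ℝ, 0 < ξ → ContinuousOn (fun u => u ^ 2 / √(ξ ^ 2 + ε * u ^ 2)) (Icc 0 1) :=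
    fun ξ hξ => ContinuousOn.div (by fun_prop) (by fun_prop) fun u _ =>
      (Real.sqrt_pos.mpr (by positivity)).ne'
  have hsub : psiEps ε H a - psiEps ε H b = 4 * π / 3 * alphaEps ε * ε *
      ∫ u in Ioi (0:ℝ), (u ^ 2 / √(a ^ 2 + ε * u ^ 2) - u ^ 2 / √(b ^ 2 + ε * u ^ 2)) *
        H (u ^ 2) * u ^ 2 := by
    rw [psiEps, psiEps, ← mul_sub, ← integral_sub (hH.integrableOn_mul (hk a ha))
      (hH.integrableOn_mul (hk b hb))]
    simp_rw [sub_mul]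
  have hint := hH.abs_integral_mul_le
    (k := fun u => u ^ 2 / √(a ^ 2 + ε * u ^ 2) - u ^ 2 / √(b ^ 2 + ε * u ^ 2))
    fun u hu => abs_sq_div_sqrt_sub_le a b hε0 hu.1
  rw [hsub, abs_mul, abs_of_nonneg (mul_nonneg (mul_nonneg (by positivity)
    (alphaEps_nonneg hε0.le hε1)) hε0.le)]
  calc 4 * π / 3 * alphaEps ε * ε * |∫ u in Ioi (0:ℝ),
        (u ^ 2 / √(a ^ 2 + ε * u ^ 2) - u ^ 2 / √(b ^ 2 + ε * u ^ 2)) * H (u ^ 2) * u ^ 2|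
      ≤ 4 * π / 3 * alphaEps ε * ε * (|a - b| / ε / (4 * π)) :=
        mul_le_mul_of_nonneg_left hint
          (mul_nonneg (mul_nonneg (by positivity) (alphaEps_nonneg hε0.le hε1)) hε0.le)
    _ = alphaEps ε / 3 * |a - b| := by field_simp

def accelV (ε : ℝ) (H : ℝ → ℝ) (ξ : ℝ) : ℝ :=
  -(4 * π / 3) * (phiEps ε H ξ + 3 * psiEps ε H ξ) / ξ ^ 3

lemma phiEps_add_psiEps_nonneg (hH : HProps H) (hε0 : 0 ≤ ε) (hε1 : ε ≤ 1) (ξ : ℝ) :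
    0 ≤ phiEps ε H ξ + 3 * psiEps ε H ξ := by
  linarith [phiEps_nonneg hH hε0 hε1 ξ, psiEps_nonneg hH hε0 hε1 ξ]

lemma phiEps_add_psiEps_le (hH : HProps H) (hε0 : 0 < ε) (hε1 : ε ≤ 1) {ξ : ℝ} (hξ : 0 ≤ ξ) :
    phiEps ε H ξ + 3 * psiEps ε H ξ ≤ alphaEps ε * (ξ + 2 * √ε) := by
  linarith [phiEps_le hH hε0.le hε1 hξ, psiEps_le hH hε0 hε1 ξ]

lemma abs_phiEps_add_psiEps_sub_le (hH : HProps H) (hε0 : 0 < ε) (hε1 : ε ≤ 1) {a b : ℝ}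
    (ha : 0 < a) (hb : 0 < b) :
    |(phiEps ε H a + 3 * psiEps ε H a) - (phiEps ε H b + 3 * psiEps ε H b)|
      ≤ 2 * alphaEps ε * |a - b| := by
  have hφ := abs_phiEps_sub_le hH hε0.le hε1 a b
  have hψ := abs_psiEps_sub_le hH hε0 hε1 ha hb
  calc |(phiEps ε H a + 3 * psiEps ε H a) - (phiEps ε H b + 3 * psiEps ε H b)|
      ≤ |phiEps ε H a - phiEps ε H b| + 3 * |psiEps ε H a - psiEps ε H b| := by
        rw [show (phiEps ε H a + 3 * psiEps ε H a) - (phiEps ε H b + 3 * psiEps ε H b)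
          = (phiEps ε H a - phiEps ε H b) + 3 * (psiEps ε H a - psiEps ε H b) by ring]
        exact (abs_add_le _ _).trans (by rw [abs_mul, abs_of_pos (show (0:ℝ) < 3 by norm_num)])
    _ ≤ 2 * alphaEps ε * |a - b| := by linarith

lemma accelV_nonpos (hH : HProps H) (hε0 : 0 ≤ ε) (hε1 : ε ≤ 1) {ξ : ℝ} (hξ : 0 ≤ ξ) :
    accelV ε H ξ ≤ 0 :=
  div_nonpos_of_nonpos_of_nonneg
    (by nlinarith [phiEps_add_psiEps_nonneg hH hε0 hε1 ξ, pi_pos]) (pow_nonneg hξ 3)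

lemma neg_sigmaD_sq_mul_lt_accelV (hH : HProps H) (hε0 : 0 < ε) (hε1 : ε ≤ 1) {t x : ℝ}
    (ht : t < 1) (hx : gammaD t ≤ x) (hxε : 4 * ε ^ ((3:ℝ) / 10) ≤ x) :
    -(sigmaD t ^ 2 / 2 * x) < accelV ε H x := by
  have hx0 : 0 < x := (gammaD_pos ht).trans_le hx
  have ht0 : 0 < 1 - t := by linarith
  have hcube : (1 - t) ^ 2 ≤ x ^ 3 :=
    gammaD_pow_three ht.le ▸ pow_le_pow_left₀ (gammaD_pos ht).le hx 3
  set e := ε ^ ((1:ℝ) / 5)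
  have he1 : e ≤ 1 := Real.rpow_le_one hε0.le hε1 (by norm_num)
  have hs0 : 0 < √ε := Real.sqrt_pos.mpr hε0
  have hs : 4 * √ε ≤ e * x := by
    calc 4 * √ε = e * (4 * ε ^ ((3:ℝ) / 10)) := by
          rw [Real.sqrt_eq_rpow, mul_left_comm, ← Real.rpow_add hε0]; norm_num
      _ ≤ e * x := by gcongr
  have hkey : (1 - e) * (x + 2 * √ε) < x := by nlinarith
  calc -(sigmaD t ^ 2 / 2 * x) = -(2 / 9 * x / (1 - t) ^ 2) := by
        rw [sigmaD]; field_simp; ring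
    _ < -(2 / 9 * ((1 - e) * (x + 2 * √ε)) / x ^ 3) := by
        rw [neg_lt_neg_iff, div_lt_div_iff₀ (by positivity) (by positivity)]
        nlinarith [mul_lt_mul_of_pos_right hkey (pow_pos ht0 2),
          mul_le_mul_of_nonneg_left hcube hx0.le]
    _ = -(4 * π / 3) * (alphaEps ε * (x + 2 * √ε)) / x ^ 3 := by
        rw [alphaEps]; field_simp; ring
    _ ≤ accelV ε H x := by
        rw [accelV, neg_mul, neg_div, neg_mul, neg_div, neg_le_neg_iff]
        gcongr
        exact phiEps_add_psiEps_le hH hε0 hε1 hx0.le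

lemma phiEps_add_psiEps_le_three_mul (hH : HProps H) (hε0 : 0 < ε) (hε1 : ε ≤ 1) {ξ : ℝ}
    (hξ : ξ ∈ Icc 0 1) : phiEps ε H ξ + 3 * psiEps ε H ξ ≤ 3 * alphaEps ε := by
  nlinarith [phiEps_add_psiEps_le hH hε0 hε1 hξ.1, Real.sqrt_le_one.mpr hε1,
    alphaEps_nonneg hε0.le hε1, hξ.2]

lemma abs_accelV_le (hH : HProps H) (hε0 : 0 < ε) (hε1 : ε ≤ 1) {m ξ : ℝ} (hm : 0 < m)
    (hξ : ξ ∈ Icc m 1) : |accelV ε H ξ| ≤ 1 / m ^ 3 := by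
  have hξ0 : 0 < ξ := hm.trans_le hξ.1
  have hS := phiEps_add_psiEps_le_three_mul hH hε0 hε1 ⟨hξ0.le, hξ.2⟩
  have hnum : 4 * π / 3 * (phiEps ε H ξ + 3 * psiEps ε H ξ) ≤ 1 :=
    calc 4 * π / 3 * (phiEps ε H ξ + 3 * psiEps ε H ξ) ≤ 4 * π / 3 * (3 * (6 * π)⁻¹) := by
          gcongr; linarith [alphaEps_le hε0.le]
      _ ≤ 1 := by field_simp; norm_num
  rw [accelV, abs_div, abs_mul, abs_neg, abs_of_pos (show 0 < 4 * π / 3 by positivity),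
    abs_of_nonneg (phiEps_add_psiEps_nonneg hH hε0.le hε1 ξ), abs_of_pos (by positivity)]
  exact div_le_div₀ zero_le_one hnum (by positivity) (pow_le_pow_left₀ hm.le hξ.1 3)

lemma abs_accelV_sub_le (hH : HProps H) (hε0 : 0 < ε) (hε1 : ε ≤ 1) {m a b : ℝ} (hm : 0 < m)
    (ha : a ∈ Icc m 1) (hb : b ∈ Icc m 1) :
    |accelV ε H a - accelV ε H b| ≤ 3 / m ^ 6 * |a - b| := by
  have hb0 : 0 < b := hm.trans_le hb.1
  have hS := abs_div_pow_three_sub_le hm ha hb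
    (abs_phiEps_add_psiEps_sub_le hH hε0 hε1 (hm.trans_le ha.1) hb0)
    (phiEps_add_psiEps_nonneg hH hε0.le hε1 b)
    (phiEps_add_psiEps_le_three_mul hH hε0 hε1 ⟨hb0.le, hb.2⟩)
  have hsub : accelV ε H a - accelV ε H b = -(4 * π / 3) *
      ((phiEps ε H a + 3 * psiEps ε H a) / a ^ 3 - (phiEps ε H b + 3 * psiEps ε H b) / b ^ 3) := by
    simp only [accelV]; ring
  rw [hsub, abs_mul, abs_neg, abs_of_pos (show 0 < 4 * π / 3 by positivity)]
  calc 4 * π / 3 * |(phiEps ε H a + 3 * psiEps ε H a) / a ^ 3 -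
        (phiEps ε H b + 3 * psiEps ε H b) / b ^ 3|
      ≤ 4 * π / 3 * ((2 * (6 * π)⁻¹ + 3 * (3 * (6 * π)⁻¹)) / m ^ 6 * |a - b|) := by
        grw [hS, alphaEps_le hε0.le]
    _ ≤ 3 / m ^ 6 * |a - b| := by
        rw [← mul_assoc, ← mul_div_assoc]
        gcongr
        field_simp
        norm_num

end Moments

/-- `-σ_D² γ / 2` in `lt_q` is the dust deceleration: `γ_D'' = -σ_D² γ_D / 2`. -/
structure IsDustComparable (T : ℝ) (γ p q : ℝ → ℝ) : Prop where
  hasDerivWithinAt_γ : ∀ t ∈ Icc 0 T, HasDerivWithinAt γ (p t) (Icc 0 T) t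
  hasDerivWithinAt_p : ∀ t ∈ Icc 0 T, HasDerivWithinAt p (q t) (Icc 0 T) t
  q_nonpos : ∀ t ∈ Icc 0 T, q t ≤ 0
  lt_q : ∀ t ∈ Icc 0 T, gammaD t ≤ γ t → γ t ≤ 1 → -(sigmaD t ^ 2 / 2 * γ t) < q t
  γ_zero : γ 0 = 1
  p_zero_nonpos : p 0 ≤ 0
  neg_two_thirds_lt_p_zero : -(2 / 3) < p 0

namespace IsDustComparable

variable {T : ℝ} {γ p q : ℝ → ℝ}

lemma le_one (h : IsDustComparable T γ p q) : ∀ t ∈ Icc 0 T, γ t ≤ 1 := fun t ht => by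
  have h0 : (0:ℝ) ∈ Icc 0 T := ⟨le_rfl, ht.1.trans ht.2⟩
  have hp : ∀ s ∈ Icc 0 T, p s ≤ 0 := fun s hs =>
    (antitoneOn_Icc_of_hasDerivWithinAt_nonpos h.hasDerivWithinAt_p h.q_nonpos h0 hs hs.1).trans
      h.p_zero_nonpos
  simpa [h.γ_zero] using
    antitoneOn_Icc_of_hasDerivWithinAt_nonpos h.hasDerivWithinAt_γ hp h0 ht ht.1

lemma hasDerivAt_div_gammaD (h : IsDustComparable T γ p q) (hT : T < 1) {t : ℝ}
    (ht : t ∈ Ioo 0 T) :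
    HasDerivAt (fun s => γ s / gammaD s) ((p t + sigmaD t * γ t) / gammaD t) t :=
  HasDerivAt.div_gammaD ((h.hasDerivWithinAt_γ t (Ioo_subset_Icc_self ht)).hasDerivAt
    (Icc_mem_nhds ht.1 ht.2)) (ht.2.trans hT)

lemma continuousOn_div_gammaD (h : IsDustComparable T γ p q) (hT : T < 1) :
    ContinuousOn (fun s => γ s / gammaD s) (Icc 0 T) :=
  ContinuousOn.div (fun t ht => (h.hasDerivWithinAt_γ t ht).continuousWithinAt)
    (fun _ ht => (hasDerivAt_gammaD (ht.2.trans_lt hT)).continuousAt.continuousWithinAt)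
    (fun _ ht => (gammaD_pos (ht.2.trans_lt hT)).ne')

lemma gammaD_le_of_nonneg (h : IsDustComparable T γ p q) (hT : T < 1) {τ : ℝ} (hτ : τ ≤ T)
    (hu : ∀ s ∈ Ioo 0 τ, 0 ≤ p s + sigmaD s * γ s) : ∀ t ∈ Icc 0 τ, gammaD t ≤ γ t := by
  intro t ht
  have hmono : MonotoneOn (fun s => γ s / gammaD s) (Icc 0 τ) := by
    refine monotoneOn_of_hasDerivWithinAt_nonneg (convex_Icc 0 τ)
      (f' := fun s => (p s + sigmaD s * γ s) / gammaD s)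
      ((h.continuousOn_div_gammaD hT).mono (Icc_subset_Icc le_rfl hτ)) (fun s hs => ?_)
      (fun s hs => ?_) <;> rw [interior_Icc] at hs
    · exact (h.hasDerivAt_div_gammaD hT ⟨hs.1, hs.2.trans_le hτ⟩).hasDerivWithinAt
    · exact div_nonneg (hu s hs) (gammaD_pos (hs.2.trans_le hτ |>.trans hT)).le
  have h1 := hmono ⟨le_rfl, ht.1.trans ht.2⟩ ht ht.1
  dsimp only at h1
  rw [h.γ_zero, gammaD_zero, div_one,
    le_div_iff₀ (gammaD_pos (ht.2.trans hτ |>.trans_lt hT)), one_mul] at h1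
  exact h1

lemma pos_add_sigmaD_mul (h : IsDustComparable T γ p q) (hT : T < 1) :
    ∀ t ∈ Icc 0 T, 0 < p t + sigmaD t * γ t := by
  refine pos_of_hasDerivWithinAt_pos_at_first_zero
    (u' := fun t => q t + (3 / 2 * sigmaD t ^ 2 * γ t + sigmaD t * p t))
    (fun t ht => (h.hasDerivWithinAt_p t ht).add
      ((hasDerivAt_sigmaD (ht.2.trans_lt hT)).hasDerivWithinAt.mul (h.hasDerivWithinAt_γ t ht)))
    ?_ fun t ht hbefore hzero => ?_
  · rw [h.γ_zero, sigmaD]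
    linarith [h.neg_two_thirds_lt_p_zero]
  · have htI : t ∈ Icc 0 T := Ioc_subset_Icc_self ht
    have hγt := h.gammaD_le_of_nonneg hT ht.2 (fun s hs => (hbefore s ⟨hs.1.le, hs.2⟩).le) t
      ⟨ht.1.le, le_rfl⟩
    have hq := h.lt_q t htI hγt (h.le_one t htI)
    have hp : p t = -(sigmaD t * γ t) := by linarith
    simp only [hp]
    nlinarith

lemma gammaD_lt (h : IsDustComparable T γ p q) (hT : T < 1) :
    ∀ t ∈ Ioc 0 T, gammaD t < γ t := by
  intro t ht
  have hmono : StrictMonoOn (fun s => γ s / gammaD s) (Icc 0 T) := by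
    refine strictMonoOn_of_hasDerivWithinAt_pos (convex_Icc 0 T) (h.continuousOn_div_gammaD hT)
      (f' := fun s => (p s + sigmaD s * γ s) / gammaD s)
      (fun s hs => ?_) (fun s hs => ?_) <;> rw [interior_Icc] at hs
    · exact (h.hasDerivAt_div_gammaD hT hs).hasDerivWithinAt
    · exact div_pos (h.pos_add_sigmaD_mul hT s (Ioo_subset_Icc_self hs))
        (gammaD_pos (hs.2.trans hT))
  have h1 := hmono ⟨le_rfl, ht.1.le.trans ht.2⟩ (Ioc_subset_Icc_self ht) ht.1
  dsimp only at h1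
  rw [h.γ_zero, gammaD_zero, div_one,
    lt_div_iff₀ (gammaD_pos (ht.2.trans_lt hT)), one_mul] at h1
  exact h1

end IsDustComparable

section GammaV

variable {H : ℝ → ℝ} {ε : ℝ}

lemma sqrt_phiEps_one_lt (hH : HProps H) (hε0 : 0 < ε) (hε1 : ε ≤ 1) :
    √(8 * π / 3 * phiEps ε H 1) < 2 / 3 := by
  set e := ε ^ ((1:ℝ) / 5)
  have hse : √ε ≤ e := by
    rw [Real.sqrt_eq_rpow]
    exact Real.rpow_le_rpow_of_exponent_ge hε0 hε1 (by norm_num)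
  have hs0 : 0 < √ε := Real.sqrt_pos.mpr hε0
  have hφ : phiEps ε H 1 < (6 * π)⁻¹ := by
    calc phiEps ε H 1 ≤ alphaEps ε * (1 + √ε) := phiEps_le hH hε0.le hε1 zero_le_one
      _ = (1 - e) * (1 + √ε) * (6 * π)⁻¹ := by rw [alphaEps, div_eq_mul_inv]; ring
      _ < 1 * (6 * π)⁻¹ := by gcongr; nlinarith [mul_pos (hs0.trans_le hse) hs0]
      _ = (6 * π)⁻¹ := one_mul _
  rw [Real.sqrt_lt' (by norm_num)]
  calc 8 * π / 3 * phiEps ε H 1 < 8 * π / 3 * (6 * π)⁻¹ := by gcongr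
    _ = (2 / 3) ^ 2 := by field_simp; norm_num

lemma IsDustComparable.of_accelV (hH : HProps H) (hε0 : 0 < ε) (hε1 : ε ≤ 1) {T : ℝ}
    (hT : T < 1) (hsmall : 4 * ε ^ ((3:ℝ) / 10) ≤ gammaD T) {γ p q : ℝ → ℝ}
    (hγ : ∀ t ∈ Icc 0 T, HasDerivWithinAt γ (p t) (Icc 0 T) t)
    (hp : ∀ t ∈ Icc 0 T, HasDerivWithinAt p (q t) (Icc 0 T) t)
    (hq : ∀ t ∈ Icc 0 T, q t ≤ 0)
    (hq_eq : ∀ t ∈ Icc 0 T, gammaD t ≤ γ t → γ t ≤ 1 → q t = accelV ε H (γ t))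
    (hγ0 : γ 0 = 1) (hp0 : p 0 = -√(8 * π / 3 * phiEps ε H 1)) :
    IsDustComparable T γ p q where
  hasDerivWithinAt_γ := hγ
  hasDerivWithinAt_p := hp
  q_nonpos := hq
  lt_q t ht hlow hup := by
    rw [hq_eq t ht hlow hup]
    exact neg_sigmaD_sq_mul_lt_accelV hH hε0 hε1 (ht.2.trans_lt hT) hlow
      (hsmall.trans ((gammaD_anti ht.2 hT.le).trans hlow))
  γ_zero := hγ0
  p_zero_nonpos := hp0 ▸ neg_nonpos.mpr (Real.sqrt_nonneg _)
  neg_two_thirds_lt_p_zero := by rw [hp0]; linarith [sqrt_phiEps_one_lt hH hε0 hε1]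

lemma exists_gammaVSol (hH : HProps H) (hε0 : 0 < ε) (hε1 : ε ≤ 1) {T : ℝ} (hT0 : 0 ≤ T)
    (hT1 : T < 1) (hsmall : 4 * ε ^ ((3:ℝ) / 10) ≤ gammaD T) :
    ∃ γ γ' : ℝ → ℝ, GammaVSol ε H (Icc 0 T) γ γ' := by
  set m := gammaD T
  have hm : 0 < m := gammaD_pos hT1
  have hm1 : m ≤ 1 := gammaD_zero ▸ gammaD_anti hT0 hT1.le
  set g := fun x => accelV ε H (projIcc m 1 hm1 x)
  have hg : LipschitzWith (3 / m ^ 6).toNNReal g := LipschitzWith.of_dist_le_mul fun x y => by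
    rw [Real.coe_toNNReal _ (by positivity)]
    exact (abs_accelV_sub_le hH hε0 hε1 hm (projIcc m 1 hm1 x).2 (projIcc m 1 hm1 y).2).trans
      (mul_le_mul_of_nonneg_left (by simpa [Subtype.dist_eq, Real.dist_eq] using
        (LipschitzWith.projIcc hm1).dist_le_mul x y) (by positivity))
  obtain ⟨γ, p, hγ0, hp0, hd⟩ := exists_hasDerivWithinAt_second_order hg
    (fun x => abs_accelV_le hH hε0 hε1 hm (projIcc m 1 hm1 x).2) 1
    (-√(8 * π / 3 * phiEps ε H 1)) hT0
  have hg_eq : ∀ t ∈ Icc 0 T, gammaD t ≤ γ t → γ t ≤ 1 → g (γ t) = accelV ε H (γ t) :=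
    fun t ht hlow hup => by
      simp only [g, projIcc_of_mem hm1 ⟨(gammaD_anti ht.2 hT1.le).trans hlow, hup⟩]
  have hcmp : IsDustComparable T γ p (fun t => g (γ t)) :=
    .of_accelV hH hε0 hε1 hT1 hsmall (fun t ht => (hd t ht).1) (fun t ht => (hd t ht).2)
      (fun t _ => accelV_nonpos hH hε0.le hε1 (hm.le.trans (projIcc m 1 hm1 _).2.1)) hg_eq hγ0 hp0
  have hγD : ∀ t ∈ Icc 0 T, gammaD t ≤ γ t := hcmp.gammaD_le_of_nonneg hT1 le_rfl
    fun s hs => (hcmp.pos_add_sigmaD_mul hT1 s (Ioo_subset_Icc_self hs)).le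
  refine ⟨γ, p, fun t ht => (gammaD_pos (ht.2.trans_lt hT1)).trans_le (hγD t ht),
    fun t ht => ⟨(hd t ht).1, ?_⟩, hγ0, hp0⟩
  have h := (hd t ht).2
  rwa [hg_eq t ht (hγD t ht) (hcmp.le_one t ht)] at h

end GammaV

/-- for sufficiently small ε the homogeneous Vlasov scale function γ_{V,ε}
exists on [0,T] and satisfies γ_{V,ε} > γ_D and σ_{V,ε} < σ_D on (0,T]. -/
theorem gammaV_comparison_with_dust
    (T : ℝ) (hT0 : 0 < T) (hT1 : T < 1) (H : ℝ → ℝ) (hH : HProps H) :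
    ∃ ε₀ : ℝ, 0 < ε₀ ∧ ∀ ε : ℝ, 0 < ε → ε ≤ ε₀ → ε ≤ 1 →
      (∃ γ γ' : ℝ → ℝ, GammaVSol ε H (Icc 0 T) γ γ') ∧
      (∀ γ γ' : ℝ → ℝ, GammaVSol ε H (Icc 0 T) γ γ' →
        ∀ t ∈ Ioc (0:ℝ) T,
          gammaD t < γ t ∧ -(γ' t) / γ t < sigmaD t) := by
  have hD := gammaD_pos hT1
  refine ⟨(gammaD T / 4) ^ ((10:ℝ) / 3), by positivity, fun ε hε0 hεε₀ hε1 => ?_⟩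
  have hsmall : 4 * ε ^ ((3:ℝ) / 10) ≤ gammaD T := by
    calc 4 * ε ^ ((3:ℝ) / 10) ≤ 4 * ((gammaD T / 4) ^ ((10:ℝ) / 3)) ^ ((3:ℝ) / 10) := by gcongr
      _ = gammaD T := by rw [← Real.rpow_mul (by positivity)]; norm_num; ring
  refine ⟨exists_gammaVSol hH hε0 hε1 hT0.le hT1 hsmall,
    fun γ γ' ⟨hpos, hode, hγ0, hγ'0⟩ t ht => ?_⟩
  have hcmp : IsDustComparable T γ γ' (fun t => accelV ε H (γ t)) :=
    .of_accelV hH hε0 hε1 hT1 hsmall (fun t ht => (hode t ht).1) (fun t ht => (hode t ht).2)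
      (fun t ht => accelV_nonpos hH hε0.le hε1 (hpos t ht).le) (fun _ _ _ _ => rfl) hγ0 hγ'0
  have htI : t ∈ Icc 0 T := Ioc_subset_Icc_self ht
  refine ⟨hcmp.gammaD_lt hT1 t ht, ?_⟩
  rw [div_lt_iff₀ (hpos t htI)]
  linarith [hcmp.pos_add_sigmaD_mul hT1 t htI]

end EV
end
end
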